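/- arXiv:2201.09080 — 4 statements merged into one kernel-verified Lean document; each statement's English description precedes it below -/
import Mathlib

section
/- If q ∈ F_co(G) and q' ∈ ℰ⁺ satisfies q' ≤ q pointwise, then q' ∈ F_co(G). (Hint from the paper: with h := 1_{{q>0}} q'/q one has G(fq') = G(fhq) for every f ∈ ℰ_b, so K_{q'} = K_q ∘ M_h where M_h is the bounded multiplication operator by h.) -/
open MeasureTheory ENNReal NNReal Filter

/-- `Gop μ G q x = ∫ G(x,y) q(y) dμ(y)`. -/
noncomputable def Gop {E : Type*} [MeasurableSpace E] (μ : Measure E)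
    (G : E → E → ℝ≥0∞) (q : E → ℝ≥0∞) (x : E) : ℝ≥0∞ :=
  ∫⁻ y, G x y * q y ∂μ

/-- The kernel operator `K_q f x = ∫ G(x,y) f(y) q(y) dμ(y)` acting on real functions. -/
noncomputable def Kq {E : Type*} [MeasurableSpace E] (μ : Measure E)
    (G : E → E → ℝ≥0∞) (q : E → ℝ≥0∞) (f : E → ℝ) (x : E) : ℝ :=
  ∫ y, (G x y * q y).toReal * f y ∂μ

/-- Compactness of `K_q` on the space of bounded measurable functions with sup-norm:
the image of the unit ball is totally bounded for the uniformity of uniform convergence. -/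
def KqCompact {E : Type*} [MeasurableSpace E] (μ : Measure E)
    (G : E → E → ℝ≥0∞) (q : E → ℝ≥0∞) : Prop :=
  TotallyBounded ((fun f => UniformFun.ofFun (Kq μ G q f)) ''
    {f : E → ℝ | Measurable f ∧ ∀ x, |f x| ≤ 1})

/-- `q ∈ F_co(G)`: `q` measurable, `Gq` bounded and `K_q` compact on `ℰ_b`. -/
def MemFco {E : Type*} [MeasurableSpace E] (μ : Measure E)
    (G : E → E → ℝ≥0∞) (q : E → ℝ≥0∞) : Prop :=
  Measurable q ∧ (∃ M : ℝ≥0, ∀ x, Gop μ G q x ≤ M) ∧ KqCompact μ G q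

/-- `q ∈ F_ui(G)`: `q` measurable and `{G(x,·)q : x ∈ E}` is uniformly integrable. -/
def MemFui {E : Type*} [MeasurableSpace E] (μ : Measure E)
    (G : E → E → ℝ≥0∞) (q : E → ℝ≥0∞) : Prop :=
  Measurable q ∧ ∀ ε : ℝ≥0∞, 0 < ε → ∃ g : E → ℝ≥0∞, Measurable g ∧
    (∫⁻ y, g y ∂μ) < ⊤ ∧
    ∀ x : E, (∫⁻ y in {y | g y ≤ G x y * q y}, G x y * q y ∂μ) ≤ ε

/- With `h := (q' / q).toReal`, which is measurable with `|h| ≤ 1`, one has `K_{q'} f = K_q (h f)`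
almost everywhere in the integration variable, since `G(x,·) q` is a.e. finite when `Gq` is finite.
Hence `K_{q'}` maps the unit ball of `ℰ_b` into the image under `K_q` of that unit ball. -/

theorem ENNReal.toReal_mul_eq_toReal_mul_div {a b c : ℝ≥0∞} (hcb : c ≤ b) (hab : a * b ≠ ∞) :
    (a * c).toReal = (a * b).toReal * (c / b).toReal := by
  rw [← ENNReal.toReal_mul, mul_assoc]
  rcases eq_or_ne b 0 with rfl | hb0
  · simp [nonpos_iff_eq_zero.mp hcb]
  rcases eq_or_ne b ∞ with rfl | hbt
  · have ha : a = 0 := by_contra fun ha => hab (ENNReal.mul_top ha)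
    simp [ha]
  rw [ENNReal.mul_div_cancel hb0 hbt]

theorem ENNReal.abs_toReal_div_le_one {a b : ℝ≥0∞} (hab : a ≤ b) : |(a / b).toReal| ≤ 1 := by
  rw [abs_of_nonneg ENNReal.toReal_nonneg]
  exact ENNReal.toReal_le_of_le_ofReal zero_le_one
    (by simpa using ENNReal.div_le_of_le_mul (by simpa using hab))

section Kernel

variable {E : Type*} [MeasurableSpace E] {μ : Measure E} {G : E → E → ℝ≥0∞} {q q' : E → ℝ≥0∞}

theorem Gop_mono (hle : ∀ y, q' y ≤ q y) (x : E) : Gop μ G q' x ≤ Gop μ G q x :=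
  lintegral_mono fun y => mul_le_mul_right (hle y) _

theorem Kq_eq_Kq_toReal_div_mul (hG : Measurable (Function.uncurry G)) (hq : Measurable q)
    (hfin : ∀ x, Gop μ G q x ≠ ∞) (hle : ∀ y, q' y ≤ q y) (f : E → ℝ) :
    Kq μ G q' f = Kq μ G q (fun y => (q' y / q y).toReal * f y) := by
  funext x
  have hGq : ∀ᵐ y ∂μ, G x y * q y ≠ ∞ :=
    (ae_lt_top ((hG.comp measurable_prodMk_left).mul hq) (hfin x)).mono fun _ => ne_of_lt
  refine integral_congr_ae (hGq.mono fun y hy => ?_)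
  simp only [ENNReal.toReal_mul_eq_toReal_mul_div (hle y) hy, mul_assoc]

theorem KqCompact.of_Kq_eq_Kq_mul (hK : KqCompact μ G q) {h : E → ℝ} (hh : Measurable h)
    (hh1 : ∀ y, |h y| ≤ 1) (heq : ∀ f, Kq μ G q' f = Kq μ G q (fun y => h y * f y)) :
    KqCompact μ G q' := by
  refine hK.subset ?_
  rintro _ ⟨f, ⟨hfm, hf1⟩, rfl⟩
  refine ⟨fun y => h y * f y, ⟨hh.mul hfm, fun y => ?_⟩, congrArg UniformFun.ofFun (heq f).symm⟩
  rw [abs_mul]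
  exact mul_le_one₀ (hh1 y) (abs_nonneg _) (hf1 y)

theorem KqCompact.mono (hK : KqCompact μ G q) (hG : Measurable (Function.uncurry G))
    (hq : Measurable q) (hfin : ∀ x, Gop μ G q x ≠ ∞) (hq' : Measurable q')
    (hle : ∀ y, q' y ≤ q y) : KqCompact μ G q' :=
  hK.of_Kq_eq_Kq_mul (hq'.div hq).ennreal_toReal (fun y => ENNReal.abs_toReal_div_le_one (hle y))
    (Kq_eq_Kq_toReal_div_mul hG hq hfin hle)

end Kernel

/-- `F_co(G)` is solid: if `q ∈ F_co(G)` and `q' ≤ q`, then `q' ∈ F_co(G)`. -/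
theorem stmt4 {E : Type*} [MeasurableSpace E] (μ : Measure E)
    (G : E → E → ℝ≥0∞) (hG : Measurable (Function.uncurry G))
    (q q' : E → ℝ≥0∞) (hq : MemFco μ G q)
    (hq' : Measurable q') (hle : ∀ y, q' y ≤ q y) :
    MemFco μ G q' := by
  obtain ⟨hqm, ⟨M, hM⟩, hK⟩ := hq
  have hfin : ∀ x, Gop μ G q x ≠ ∞ := fun x => ne_top_of_le_ne_top coe_ne_top (hM x)
  exact ⟨hq', ⟨M, fun x => (Gop_mono hle x).trans (hM x)⟩, hK.mono hG hqm hfin hq' hle⟩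
end

section
/- Let q ∈ ℰ⁺ and suppose that for every ε > 0 there exist q' ∈ F_ui(G) and q'' ∈ ℰ⁺ with q = q' + q'' and Gq'' ≤ ε pointwise. Then q ∈ F_ui(G). -/
/-!
Given `ε`, take `δ` with `3δ ≤ ε`, split `q = q' + q''` with `Gq'' ≤ δ`, and let `g` witness
uniform integrability of `q'` at level `δ`; then `2g` works for `q`. Write `a = G(x,·)q'` and
`b = G(x,·)q''`. Where `2g ≤ a + b` but `a < g`, necessarily `a ≤ b`, so on `{2g ≤ a + b}`
we have `a + b ≤ 1_{g ≤ a} a + 2b`, whose integral is at most `δ + 2δ`.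
-/

open MeasureTheory ENNReal NNReal Filter

namespace ENNReal

theorem exists_pos_three_mul_le {ε : ℝ≥0∞} (hε : 0 < ε) :
    ∃ δ : ℝ≥0, 0 < δ ∧ 3 * (δ : ℝ≥0∞) ≤ ε := by
  obtain ⟨δ, hδ, hδε⟩ :=
    lt_iff_exists_nnreal_btwn.1 (ENNReal.div_pos hε.ne' (ofNat_ne_top (n := 3)))
  refine ⟨δ, by exact_mod_cast hδ, ?_⟩
  rw [mul_comm]
  exact mul_le_of_le_div hδε.le

theorem add_le_ite_add_two_mul {a b g : ℝ≥0∞} (h : 2 * g ≤ a + b) :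
    a + b ≤ (if g ≤ a then a else 0) + 2 * b := by
  split_ifs with hga
  · gcongr
    exact le_mul_of_one_le_left' one_le_two
  · have hab : a ≤ b := by
      by_contra! hba
      have : a + b < g + g := ENNReal.add_lt_add (not_le.1 hga) (hba.trans (not_le.1 hga))
      exact (h.trans_lt this).ne (two_mul g)
    rw [zero_add, two_mul]
    gcongr

end ENNReal

theorem setLIntegral_add_le_setLIntegral_add_two_mul {E : Type*} [MeasurableSpace E]
    {μ : Measure E} {f g h : E → ℝ≥0∞} (hf : Measurable f) (hg : Measurable g)
    (hh : Measurable h) :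
    ∫⁻ y in {y | 2 * g y ≤ f y + h y}, f y + h y ∂μ ≤
      ∫⁻ y in {y | g y ≤ f y}, f y ∂μ + 2 * ∫⁻ y, h y ∂μ := by
  have hT : MeasurableSet {y | g y ≤ f y} := measurableSet_le hg hf
  calc ∫⁻ y in {y | 2 * g y ≤ f y + h y}, f y + h y ∂μ
      ≤ ∫⁻ y in {y | 2 * g y ≤ f y + h y}, {y | g y ≤ f y}.indicator f y + 2 * h y ∂μ := by
        refine setLIntegral_mono ((hf.indicator hT).add (hh.const_mul 2)) fun y hy => ?_
        simpa only [Set.indicator_apply, Set.mem_ofPred_eq] using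
          ENNReal.add_le_ite_add_two_mul hy
    _ ≤ ∫⁻ y, {y | g y ≤ f y}.indicator f y + 2 * h y ∂μ := setLIntegral_le_lintegral _ _
    _ = ∫⁻ y in {y | g y ≤ f y}, f y ∂μ + 2 * ∫⁻ y, h y ∂μ := by
        rw [lintegral_add_left (hf.indicator hT), lintegral_indicator hT,
          lintegral_const_mul 2 hh]

/-- If for every `ε > 0` one can write `q = q' + q''` with `q' ∈ F_ui(G)`
and `Gq'' ≤ ε` pointwise, then `q ∈ F_ui(G)`. -/
theorem stmt6 {E : Type*} [MeasurableSpace E] (μ : Measure E)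
    (G : E → E → ℝ≥0∞) (hG : Measurable (Function.uncurry G))
    (q : E → ℝ≥0∞) (hq : Measurable q)
    (h : ∀ ε : ℝ≥0, 0 < ε → ∃ q' q'' : E → ℝ≥0∞,
      MemFui μ G q' ∧ Measurable q'' ∧ (∀ y, q y = q' y + q'' y) ∧
      ∀ x, Gop μ G q'' x ≤ (ε : ℝ≥0∞)) :
    MemFui μ G q := by
  refine ⟨hq, fun ε hε => ?_⟩
  obtain ⟨δ, hδ, h3δ⟩ := ENNReal.exists_pos_three_mul_le hε
  obtain ⟨q', q'', ⟨hq', hq'ui⟩, hq'', hsum, hGq''⟩ := h δ hδ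
  obtain ⟨g, hg, hg_int, hg_tail⟩ := hq'ui δ (by exact_mod_cast hδ)
  refine ⟨fun y => 2 * g y, hg.const_mul 2, ?_, fun x => ?_⟩
  · rw [lintegral_const_mul 2 hg]
    exact mul_lt_top ofNat_lt_top hg_int
  have hGx : Measurable (G x) := hG.comp measurable_prodMk_left
  simp only [hsum, mul_add]
  calc _ ≤ ∫⁻ y in {y | g y ≤ G x y * q' y}, G x y * q' y ∂μ + 2 * Gop μ G q'' x :=
        setLIntegral_add_le_setLIntegral_add_two_mul (hGx.mul hq') hg (hGx.mul hq'')
    _ ≤ δ + 2 * δ := add_le_add (hg_tail x) (mul_le_mul_right (hGq'' x) 2)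
    _ = 3 * δ := by ring
    _ ≤ ε := h3δ
end

section
/- (Theorem: F_co ⊆ F_ui) If there exists a strictly positive function q₀ ∈ F_ui(G), then F_co(G) ⊆ F_ui(G). That is: if q₀ > 0 everywhere with {G(x,·)q₀ : x ∈ E} uniformly integrable, and q ∈ ℰ⁺ is such that Gq is bounded and K_q is compact on ℰ_b, then {G(x,·)q : x ∈ E} is uniformly integrable. -/
open MeasureTheory ENNReal NNReal Filter

/-! Split `G(x,·) q` along `A n = {n q₀ < q}`. Off `A n` it is at most `n G(x,·) q₀`, which is
uniformly integrable. On `A n` its mass `∫_{A n} G(x,·) q = K_q 1_{A n} (x)` tends to `0` for each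
`x`, because `⋂ A n ⊆ {q = ∞}` and `Gq(x) < ∞`; since the `K_q 1_{A n}` lie in a totally bounded
subset of `ℰ_b`, whose closure is compact, this convergence is uniform in `x`. -/

open Topology Function

theorem TotallyBounded.tendstoUniformly_of_tendsto {ι α β : Type*} [UniformSpace β]
    [CompleteSpace β] [T2Space β] {l : Filter ι} {s : Set (UniformFun α β)} (hs : TotallyBounded s)
    {F : ι → α → β} {f : α → β} (hFs : ∀ i, UniformFun.ofFun (F i) ∈ s)
    (hF : ∀ x, Tendsto (fun i => F i x) l (𝓝 (f x))) : TendstoUniformly F f l := by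
  have hK : IsCompact (_root_.closure s) := hs.closure.isCompact_of_isClosed isClosed_closure
  refine UniformFun.tendsto_iff_tendstoUniformly.mp <| hK.tendsto_nhds_of_unique_mapClusterPt
    (.of_forall fun i => subset_closure (hFs i)) fun g _ hg => ?_
  refine UniformFun.toFun.injective (funext fun x => ?_)
  have hgx := hg.tendsto_comp ((UniformFun.uniformContinuous_eval β x).continuous.tendsto g)
  exact eq_of_nhds_neBot (hgx.neBot.mono (inf_le_inf_left _ (hF x)))

theorem iInter_setOf_natCast_mul_lt_subset {E : Type*} {q₀ q : E → ℝ≥0∞}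
    (hq₀ : ∀ y, 0 < q₀ y) : ⋂ n : ℕ, {y | n * q₀ y < q y} ⊆ {y | q y = ⊤} := by
  intro y hy
  by_contra hqy
  obtain ⟨n, hn⟩ := ENNReal.exists_nat_mul_gt (hq₀ y).ne' hqy
  exact lt_asymm hn (Set.mem_iInter.mp hy n)

section Kernel

variable {E : Type*} [MeasurableSpace E] {μ : Measure E} {G : E → E → ℝ≥0∞} {q : E → ℝ≥0∞}

theorem tendsto_setLIntegral_mul_of_iInter_subset {f : E → ℝ≥0∞} {A : ℕ → Set E}
    (hf : Measurable f) (hq : Measurable q) (hfq : ∫⁻ y, f y * q y ∂μ ≠ ⊤)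
    (hA : ∀ n, MeasurableSet (A n)) (hA_anti : Antitone A) (hAq : ⋂ n, A n ⊆ {y | q y = ⊤}) :
    Tendsto (fun n => ∫⁻ y in A n, f y * q y ∂μ) atTop (𝓝 0) := by
  set ν := μ.withDensity fun y => f y * q y
  have hν : ∀ n, ν (A n) = ∫⁻ y in A n, f y * q y ∂μ := fun n => withDensity_apply _ (hA n)
  have hν_iInter : ν (⋂ n, A n) = 0 := by
    rw [withDensity_apply _ (.iInter hA)]
    refine (lintegral_congr_ae ?_).trans lintegral_zero
    filter_upwards [ae_restrict_of_ae (ae_lt_top (hf.mul hq) hfq), ae_restrict_mem (.iInter hA)]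
      with y (hlt : f y * q y < ⊤) hy
    rw [hAq hy] at hlt ⊢
    rcases eq_or_ne (f y) 0 with hfy | hfy
    · simp [hfy]
    · exact absurd hlt (by simp [ENNReal.mul_top hfy])
  have hν_fin : ν (A 0) ≠ ⊤ :=
    (hν 0).symm ▸ ne_top_of_le_ne_top hfq (setLIntegral_le_lintegral _ _)
  have := tendsto_measure_iInter_atTop (fun n => (hA n).nullMeasurableSet) hA_anti ⟨0, hν_fin⟩
  rw [hν_iInter] at this
  simpa only [Function.comp_def, hν] using this

theorem Kq_indicator_one {x : E} (hGq : Measurable fun y => G x y * q y)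
    (hfin : Gop μ G q x ≠ ⊤) {A : Set E} (hA : MeasurableSet A) :
    Kq μ G q (A.indicator 1) x = (∫⁻ y in A, G x y * q y ∂μ).toReal := by
  have hind : ∀ y, (G x y * q y).toReal * A.indicator 1 y
      = (A.indicator (fun y => G x y * q y) y).toReal := by
    intro y; by_cases hy : y ∈ A <;> simp [hy]
  have hlt : ∀ᵐ y ∂μ, A.indicator (fun y => G x y * q y) y < ⊤ := by
    filter_upwards [ae_lt_top hGq hfin] with y hy
    exact (Set.indicator_le_self _ _ y).trans_lt hy
  rw [Kq, integral_congr_ae (.of_forall hind),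
    integral_toReal (hGq.indicator hA).aemeasurable hlt, lintegral_indicator hA]

theorem tendstoUniformly_setLIntegral_of_kqCompact {ι : Type*} {l : Filter ι}
    (hG : Measurable (uncurry G)) (hq : Measurable q) (hGq : ∀ x, Gop μ G q x ≠ ⊤)
    (hK : KqCompact μ G q) {A : ι → Set E} (hA : ∀ i, MeasurableSet (A i))
    (hlim : ∀ x, Tendsto (fun i => ∫⁻ y in A i, G x y * q y ∂μ) l (𝓝 0)) :
    TendstoUniformly (fun i x => (∫⁻ y in A i, G x y * q y ∂μ).toReal) 0 l := by
  have hKA : ∀ i, Kq μ G q ((A i).indicator 1) = fun x => (∫⁻ y in A i, G x y * q y ∂μ).toReal :=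
    fun i => funext fun x =>
      Kq_indicator_one ((hG.comp measurable_prodMk_left).mul hq) (hGq x) (hA i)
  refine hK.tendstoUniformly_of_tendsto (fun i => ⟨(A i).indicator 1,
    ⟨measurable_one.indicator (hA i), fun x => ?_⟩, congrArg _ (hKA i)⟩) fun x => ?_
  · by_cases hx : x ∈ A i <;> simp [hx]
  · exact (ENNReal.tendsto_toReal ENNReal.zero_ne_top).comp (hlim x)

theorem tendstoUniformly_setLIntegral_natCast_mul_lt (hG : Measurable (uncurry G))
    {q₀ : E → ℝ≥0∞} (hq₀ : Measurable q₀) (hq₀pos : ∀ y, 0 < q₀ y) (hq : Measurable q)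
    (hGq : ∀ x, Gop μ G q x ≠ ⊤) (hK : KqCompact μ G q) :
    TendstoUniformly (fun (n : ℕ) x => (∫⁻ y in {y | n * q₀ y < q y}, G x y * q y ∂μ).toReal)
      0 atTop := by
  have hA : ∀ n : ℕ, MeasurableSet {y | n * q₀ y < q y} := fun n =>
    measurableSet_lt (hq₀.const_mul _) hq
  have hA_anti : Antitone fun n : ℕ => {y | n * q₀ y < q y} :=
    fun m n hmn y (hy : n * q₀ y < q y) => (mul_le_mul_left (Nat.cast_le.mpr hmn) _).trans_lt hy
  exact tendstoUniformly_setLIntegral_of_kqCompact hG hq hGq hK hA fun x =>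
    tendsto_setLIntegral_mul_of_iInter_subset (hG.comp measurable_prodMk_left) hq (hGq x) hA
      hA_anti (iInter_setOf_natCast_mul_lt_subset hq₀pos)

end Kernel

theorem eventually_forall_le_of_tendstoUniformly_toReal {ι α : Type*} {l : Filter ι}
    {F : ι → α → ℝ≥0∞} (hF : ∀ i x, F i x ≠ ⊤)
    (h : TendstoUniformly (fun i x => (F i x).toReal) 0 l) {η : ℝ≥0∞} (hη : 0 < η) :
    ∀ᶠ i in l, ∀ x, F i x ≤ η := by
  have hδ : 0 < (min η 1).toReal := ENNReal.toReal_pos (by positivity) (by simp)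
  filter_upwards [Metric.tendstoUniformly_iff.mp h _ hδ] with i hi x
  have hlt : (F i x).toReal < (min η 1).toReal := by
    simpa [Real.dist_eq, abs_of_nonneg] using hi x
  calc F i x ≤ min η 1 := (ENNReal.toReal_le_toReal (hF i x) (by simp)).mp hlt.le
    _ ≤ η := min_le_left _ _

theorem setLIntegral_le_setLIntegral_add_mul {E : Type*} [MeasurableSpace E] {μ : Measure E}
    {F F₀ g₀ : E → ℝ≥0∞} {A : Set E} {c : ℝ≥0∞} (hc₀ : c ≠ 0) (hc : c ≠ ⊤)
    (hF₀ : Measurable F₀) (hFA : ∀ y ∉ A, F y ≤ c * F₀ y) :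
    ∫⁻ y in {y | c * g₀ y ≤ F y}, F y ∂μ
      ≤ ∫⁻ y in A, F y ∂μ + c * ∫⁻ y in {y | g₀ y ≤ F₀ y}, F₀ y ∂μ := by
  set S := {y | c * g₀ y ≤ F y}
  have hsub : S \ A ⊆ {y | g₀ y ≤ F₀ y} := fun y ⟨hyS, hyA⟩ =>
    (ENNReal.mul_le_mul_iff_right hc₀ hc).mp (hyS.trans (hFA y hyA))
  calc ∫⁻ y in S, F y ∂μ = ∫⁻ y in (S ∩ A) ∪ (S \ A), F y ∂μ := by rw [Set.inter_union_sdiff]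
    _ ≤ ∫⁻ y in S ∩ A, F y ∂μ + ∫⁻ y in S \ A, F y ∂μ := lintegral_union_le _ _ _
    _ ≤ ∫⁻ y in A, F y ∂μ + ∫⁻ y in S \ A, c * F₀ y ∂μ := by
      gcongr ?_ + ?_
      · exact lintegral_mono_set Set.inter_subset_right
      · exact setLIntegral_mono (hF₀.const_mul c) fun y hy => hFA y hy.2
    _ ≤ ∫⁻ y in A, F y ∂μ + c * ∫⁻ y in {y | g₀ y ≤ F₀ y}, F₀ y ∂μ := by
      rw [lintegral_const_mul' _ _ hc]
      gcongr

/-- Theorem: F_co ⊆ F_ui: if `F_ui(G)` contains a strictly positive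
function, then `F_co(G) ⊆ F_ui(G)`. -/
theorem stmt8 {E : Type*} [MeasurableSpace E] (μ : Measure E)
    (G : E → E → ℝ≥0∞) (hG : Measurable (Function.uncurry G))
    (q₀ : E → ℝ≥0∞) (hq₀pos : ∀ x, 0 < q₀ x) (hq₀ : MemFui μ G q₀)
    (q : E → ℝ≥0∞) (hq : MemFco μ G q) :
    MemFui μ G q := by
  obtain ⟨hq₀m, hq₀ui⟩ := hq₀
  obtain ⟨hqm, ⟨M, hM⟩, hK⟩ := hq
  have hGq : ∀ x, Gop μ G q x ≠ ⊤ := fun x => ne_top_of_le_ne_top coe_ne_top (hM x)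
  have hunif := tendstoUniformly_setLIntegral_natCast_mul_lt hG hq₀m hq₀pos hqm hGq hK
  refine ⟨hqm, fun ε hε => ?_⟩
  have hε2 : 0 < ε / 2 := ENNReal.half_pos hε.ne'
  obtain ⟨n, hn, hn1⟩ := ((eventually_forall_le_of_tendstoUniformly_toReal
    (fun n x => ne_top_of_le_ne_top (hGq x) (setLIntegral_le_lintegral _ _)) hunif hε2).and
    (eventually_ge_atTop 1)).exists
  have hn0 : (n : ℝ≥0∞) ≠ 0 := by exact_mod_cast (Nat.one_le_iff_ne_zero.mp hn1)
  obtain ⟨g₀, hg₀, hg₀int, hg₀ui⟩ :=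
    hq₀ui (ε / 2 / n) (ENNReal.div_pos hε2.ne' (natCast_ne_top n))
  refine ⟨fun y => n * g₀ y, hg₀.const_mul _, ?_, fun x => ?_⟩
  · rw [lintegral_const_mul _ hg₀]
    exact mul_lt_top (natCast_lt_top n) hg₀int
  calc ∫⁻ y in {y | n * g₀ y ≤ G x y * q y}, G x y * q y ∂μ
      ≤ ∫⁻ y in {y | n * q₀ y < q y}, G x y * q y ∂μ
          + n * ∫⁻ y in {y | g₀ y ≤ G x y * q₀ y}, G x y * q₀ y ∂μ :=
        setLIntegral_le_setLIntegral_add_mul hn0 (natCast_ne_top n)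
          ((hG.comp measurable_prodMk_left).mul hq₀m)
          fun y hy => by
            calc G x y * q y ≤ G x y * (n * q₀ y) := by gcongr; exact not_lt.mp hy
              _ = n * (G x y * q₀ y) := by ring
    _ ≤ ε / 2 + n * (ε / 2 / n) := by gcongr; exacts [hn x, hg₀ui x]
    _ ≤ ε := by
      grw [ENNReal.mul_div_le, ENNReal.add_halves]
end

section
/- (Proposition 3.1, inclusion part) Let E ⊆ ℝ^d be a Borel set with Lebesgue measure μ, and let G : E × E → [0,∞] be measurable with G(x,y) ≤ φ(|x−y|), where φ : [0,∞) → [0,∞] is measurable, φ ≤ a on (r,∞) for some a, r ∈ (0,∞), and ∫₀^r φ(t) t^{d−1} dt < ∞. Then every q : E → [0,1] measurable, integrable, and with q(x) → 0 as |x| → ∞ belongs to F_ui(G), i.e. the family {G(x,·)q : x ∈ E} is uniformly integrable. -/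
open MeasureTheory ENNReal NNReal Filter
open Topology

open Set Metric Module in
lemma my_lintegral_fun_norm_addHaar {E : Type*} [NormedAddCommGroup E] [NormedSpace ℝ E]
    [MeasurableSpace E] [BorelSpace E] [Nontrivial E] (μ : Measure E) [FiniteDimensional ℝ E]
    [μ.IsAddHaarMeasure] (f : ℝ → ℝ≥0∞) (hf : Measurable f) :
    ∫⁻ x, f ‖x‖ ∂μ
      = μ.toSphere Set.univ *
        ∫⁻ y in Set.Ioi (0 : ℝ), ENNReal.ofReal (y ^ (finrank ℝ E - 1)) * f y := by
  have hm1 : Measurable fun p : sphere (0 : E) 1 × Ioi (0 : ℝ) => f p.2 :=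
    hf.comp (measurable_subtype_coe.comp measurable_snd)
  calc
    ∫⁻ x, f ‖x‖ ∂μ = ∫⁻ x : ({(0 : E)}ᶜ : Set E), f ‖(x : E)‖ ∂(μ.comap (↑)) := by
      rw [lintegral_subtype_comap (measurableSet_singleton (0 : E)).compl
        (fun x => f ‖x‖), MeasureTheory.restrict_compl_singleton]
    _ = ∫⁻ p : sphere (0 : E) 1 × Ioi (0 : ℝ), f p.2
        ∂(μ.toSphere.prod (.volumeIoiPow (finrank ℝ E - 1))) := by
      rw [← μ.measurePreserving_homeomorphUnitSphereProd.lintegral_comp hm1]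
      refine lintegral_congr fun x => ?_
      simp
    _ = μ.toSphere Set.univ * ∫⁻ t : Ioi (0 : ℝ), f t
        ∂(Measure.volumeIoiPow (finrank ℝ E - 1)) := by
      rw [lintegral_prod (fun p : sphere (0 : E) 1 × Ioi (0 : ℝ) => f p.2) hm1.aemeasurable]
      simp [lintegral_const]
      ring
    _ = _ := by
      rw [Measure.volumeIoiPow, lintegral_withDensity_eq_lintegral_mul _
        (f := fun r : Ioi (0:ℝ) => ENNReal.ofReal ((r : ℝ) ^ (finrank ℝ E - 1)))
        ((measurable_subtype_coe.pow_const _).ennreal_ofReal)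
        (g := fun t : Ioi (0:ℝ) => f t) (hf.comp measurable_subtype_coe)]
      simp only [Pi.mul_apply]
      rw [lintegral_subtype_comap measurableSet_Ioi
          (fun y => ENNReal.ofReal (y ^ (finrank ℝ E - 1)) * f y)]

/-- Proposition 3.1, inclusion part: on a Borel set `E ⊆ ℝ^d` with
Lebesgue measure, if `G(x,y) ≤ φ(|x-y|)` with `φ ≤ a` on `(r,∞)` and
`∫₀^r φ(t) t^{d-1} dt < ∞`, then every integrable measurable `q : E → [0,1]` with
`q(x) → 0` as `|x| → ∞` belongs to `F_ui(G)`. -/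
theorem stmt13 (d : ℕ) (hd : 1 ≤ d)
    (E : Set (EuclideanSpace ℝ (Fin d))) (hE : MeasurableSet E)
    (G : EuclideanSpace ℝ (Fin d) → EuclideanSpace ℝ (Fin d) → ℝ≥0∞)
    (hG : Measurable (Function.uncurry G))
    (φ : ℝ → ℝ≥0∞) (hφ : Measurable φ)
    (a : ℝ≥0) (r : ℝ) (ha : 0 < a) (hr : 0 < r)
    (hφa : ∀ t : ℝ, r < t → φ t ≤ (a : ℝ≥0∞))
    (hφint : (∫⁻ t in Set.Ioo (0 : ℝ) r, φ t * ENNReal.ofReal (t ^ (d - 1))) < ⊤)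
    (hGφ : ∀ x ∈ E, ∀ y ∈ E, G x y ≤ φ (dist x y))
    (q : EuclideanSpace ℝ (Fin d) → ℝ≥0∞) (hq : Measurable q)
    (hq1 : ∀ x ∈ E, q x ≤ 1)
    (hqint : (∫⁻ y in E, q y) < ⊤)
    (hq0 : ∀ ε : ℝ≥0∞, 0 < ε → ∃ R : ℝ, ∀ x ∈ E, R ≤ ‖x‖ → q x ≤ ε) :
    ∀ ε : ℝ≥0∞, 0 < ε →
      ∃ g : EuclideanSpace ℝ (Fin d) → ℝ≥0∞, Measurable g ∧
        (∫⁻ y in E, g y) < ⊤ ∧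
        ∀ x ∈ E,
          (∫⁻ y in {y | g y ≤ G x y * q y}, G x y * q y ∂(volume.restrict E)) ≤ ε := by
  intro ε hε
  classical
  have hfr : Module.finrank ℝ (EuclideanSpace ℝ (Fin d)) = d := finrank_euclideanSpace_fin
  haveI : Nontrivial (EuclideanSpace ℝ (Fin d)) :=
    Module.nontrivial_of_finrank_pos (R := ℝ) (by omega)
  -- the truncated tail functions
  set F : ℝ → ℝ≥0∞ := fun t => (Set.Iic r).indicator φ t with hF
  have hFmeas : Measurable F := hφ.indicator measurableSet_Iic
  have hFfin : (∫⁻ z : EuclideanSpace ℝ (Fin d), F ‖z‖) < ⊤ := by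
    rw [my_lintegral_fun_norm_addHaar volume F hFmeas]
    refine ENNReal.mul_lt_top (measure_lt_top _ _) ?_
    have heq : (∫⁻ y in Set.Ioi (0 : ℝ),
        ENNReal.ofReal (y ^ (Module.finrank ℝ (EuclideanSpace ℝ (Fin d)) - 1)) * F y)
        = ∫⁻ y in Set.Ioc (0 : ℝ) r, ENNReal.ofReal (y ^ (d - 1)) * φ y := by
      rw [hfr]
      have : ∀ y : ℝ, ENNReal.ofReal (y ^ (d - 1)) * F y
          = (Set.Iic r).indicator (fun y => ENNReal.ofReal (y ^ (d - 1)) * φ y) y := by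
        intro y
        by_cases h : y ∈ Set.Iic r <;>
          simp [hF, Set.indicator_of_mem, Set.indicator_of_notMem, h]
      rw [lintegral_congr this, lintegral_indicator measurableSet_Iic,
        Measure.restrict_restrict measurableSet_Iic]
      congr 1
      rw [Set.Iic_inter_Ioi]
    rw [heq]
    have : (∫⁻ y in Set.Ioc (0 : ℝ) r, ENNReal.ofReal (y ^ (d - 1)) * φ y)
        = ∫⁻ y in Set.Ioo (0 : ℝ) r, φ y * ENNReal.ofReal (y ^ (d - 1)) := by
      rw [← setLIntegral_congr Ioo_ae_eq_Ioc]
      exact lintegral_congr fun y => mul_comm _ _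
    rw [this]
    exact hφint
  set Ψ : ℕ → EuclideanSpace ℝ (Fin d) → ℝ≥0∞ :=
    fun n z => φ ‖z‖ - min (φ ‖z‖) ((a : ℝ≥0∞) + n) with hΨ
  have hΨmeas : ∀ n, Measurable (Ψ n) := fun n =>
    (hφ.comp measurable_norm).sub ((hφ.comp measurable_norm).min measurable_const)
  have hΨle : ∀ n z, Ψ n z ≤ F ‖z‖ := by
    intro n z
    by_cases h : ‖z‖ ≤ r
    · simp only [hΨ, hF, Set.indicator_of_mem (Set.mem_Iic.mpr h)]
      exact tsub_le_self
    · have h1 : φ ‖z‖ ≤ (a : ℝ≥0∞) + n :=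
        le_trans (hφa _ (lt_of_not_ge h)) le_self_add
      simp [hΨ, hF, Set.indicator_of_notMem, h, min_eq_left h1]
  have hΨtend : ∀ᵐ z : EuclideanSpace ℝ (Fin d),
      Tendsto (fun n => Ψ n z) atTop (𝓝 0) := by
    filter_upwards [ae_lt_top (show Measurable fun z : EuclideanSpace ℝ (Fin d) => F ‖z‖ from hFmeas.comp measurable_norm) hFfin.ne] with z hz
    by_cases h : ‖z‖ ≤ r
    · have hφz : φ ‖z‖ < ⊤ := by
        simpa only [hF, Set.indicator_of_mem (Set.mem_Iic.mpr h)] using hz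
      obtain ⟨N, hN⟩ := ENNReal.exists_nat_gt hφz.ne
      refine tendsto_nhds_of_eventually_eq ?_
      filter_upwards [eventually_ge_atTop N] with n hn
      have h1 : φ ‖z‖ ≤ (a : ℝ≥0∞) + n := by
        refine le_trans hN.le (le_trans ?_ le_add_self)
        exact_mod_cast Nat.cast_le.mpr hn
      simp [hΨ, min_eq_left h1]
    · have h1 : φ ‖z‖ ≤ (a : ℝ≥0∞) + (0 : ℕ) :=
        le_trans (hφa _ (lt_of_not_ge h)) le_self_add
      refine tendsto_nhds_of_eventually_eq (Eventually.of_forall fun n => ?_)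
      have h2 : φ ‖z‖ ≤ (a : ℝ≥0∞) + n := le_trans (hφa _ (lt_of_not_ge h)) le_self_add
      simp [hΨ, min_eq_left h2]
  have htend : Tendsto (fun n => ∫⁻ z, Ψ n z) atTop (𝓝 0) := by
    have h0 : (0 : ℝ≥0∞) = ∫⁻ _z : EuclideanSpace ℝ (Fin d), 0 := by simp
    rw [h0]
    exact tendsto_lintegral_of_dominated_convergence (fun z => F ‖z‖) hΨmeas
      (fun n => Eventually.of_forall (hΨle n)) hFfin.ne hΨtend
  have hhalf : (0 : ℝ≥0∞) < ε / 2 := ENNReal.half_pos hε.ne'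
  obtain ⟨N, hN⟩ := (htend.eventually (gt_mem_nhds hhalf)).exists
  set M : ℝ≥0∞ := (a : ℝ≥0∞) + N with hM
  have hMtop : M ≠ ⊤ :=
    ENNReal.add_ne_top.mpr ⟨ENNReal.coe_ne_top, ENNReal.natCast_ne_top N⟩
  refine ⟨fun y => 2 * M * q y, (measurable_const.mul hq), ?_, ?_⟩
  · rw [lintegral_const_mul (2 * M) hq]
    exact ENNReal.mul_lt_top (ENNReal.mul_lt_top (by norm_num) hMtop.lt_top) hqint
  · intro x hx
    set S : Set (EuclideanSpace ℝ (Fin d)) := {y | 2 * M * q y ≤ G x y * q y} with hS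
    have hGx : Measurable (G x) := hG.of_uncurry_left
    have hSm : MeasurableSet S := measurableSet_le (measurable_const.mul hq) (hGx.mul hq)
    have hsub : Measurable fun y : EuclideanSpace ℝ (Fin d) => x - y :=
      measurable_const.sub measurable_id
    have key : ∀ y ∈ S ∩ E, G x y * q y ≤ 2 * Ψ N (x - y) := by
      rintro y ⟨hyS, hyE⟩
      have hq1y : q y ≤ 1 := hq1 y hyE
      have h1 : G x y ≤ φ ‖x - y‖ := by
        rw [← dist_eq_norm]; exact hGφ x hx y hyE
      have hmin : φ ‖x - y‖ ≤ min (φ ‖x - y‖) M + Ψ N (x - y) := by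
        rcases le_total (φ ‖x - y‖) M with h | h
        · rw [min_eq_left h]; exact le_self_add
        · rw [min_eq_right h]
          simp only [hΨ, ← hM, min_eq_right h]
          exact le_add_tsub
      have h2 : G x y * q y ≤ M * q y + Ψ N (x - y) := by
        calc G x y * q y ≤ (min (φ ‖x - y‖) M + Ψ N (x - y)) * q y :=
              mul_le_mul_left (h1.trans hmin) _
          _ = min (φ ‖x - y‖) M * q y + Ψ N (x - y) * q y := add_mul _ _ _
          _ ≤ M * q y + Ψ N (x - y) * 1 :=
              add_le_add (mul_le_mul_left (min_le_right _ _) _)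
                (mul_le_mul_right hq1y _)
          _ = M * q y + Ψ N (x - y) := by rw [mul_one]
      have hfin : M * q y ≠ ⊤ :=
        ENNReal.mul_ne_top hMtop (hq1y.trans_lt ENNReal.one_lt_top).ne
      have h3 : M * q y ≤ Ψ N (x - y) := by
        have h4 : M * q y + M * q y ≤ M * q y + Ψ N (x - y) := by
          calc M * q y + M * q y = 2 * M * q y := by ring
            _ ≤ G x y * q y := hyS
            _ ≤ M * q y + Ψ N (x - y) := h2
        exact (ENNReal.add_le_add_iff_left hfin).mp h4
      calc G x y * q y ≤ M * q y + Ψ N (x - y) := h2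
        _ ≤ Ψ N (x - y) + Ψ N (x - y) := add_le_add_left h3 _
        _ = 2 * Ψ N (x - y) := (two_mul _).symm
    have hΨxm : Measurable fun y : EuclideanSpace ℝ (Fin d) => Ψ N (x - y) :=
      (hΨmeas N).comp hsub
    calc (∫⁻ y in S, G x y * q y ∂(volume.restrict E))
        = ∫⁻ y in S ∩ E, G x y * q y := by
          rw [Measure.restrict_restrict hSm]
      _ ≤ ∫⁻ y in S ∩ E, 2 * Ψ N (x - y) :=
          setLIntegral_mono (measurable_const.mul hΨxm) key
      _ ≤ ∫⁻ y, 2 * Ψ N (x - y) := setLIntegral_le_lintegral _ _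
      _ = 2 * ∫⁻ y, Ψ N (x - y) := lintegral_const_mul 2 hΨxm
      _ = 2 * ∫⁻ z, Ψ N z := by
          congr 1
          rw [← lintegral_map (hΨmeas N) hsub, Measure.map_sub_left_eq_self volume x]
      _ ≤ 2 * (ε / 2) := mul_le_mul_right hN.le 2
      _ = ε := by rw [two_mul, ENNReal.add_halves]
end
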